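/- Suppose t > d*a*b. For every v ∈ Ŝ_t, the image φ̂(v) is reducible in O±_{t+ρ} if and only if v is reducible in O±_t. Consequently, φ̂ maps the Hilbert basis H(O±_t) bijectively onto H(O±_{t+ρ}), and in particular the cardinalities of H(O±_t) and H(O±_{t+ρ}) are equal. -/
import Mathlib


/-- The factorization homomorphism `π_t` for the shifted numerical semigroup
`M_t = ⟨t - d*a, t, t + d*b⟩`, applied to `v = (v0, v1, v2) ∈ ℤ³`. -/
def pi3 (a b d t : ℤ) (v : ℤ × ℤ × ℤ) : ℤ :=
  (t - d * a) * v.1 + t * v.2.1 + (t + d * b) * v.2.2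

/-- The length (coordinate sum) `ℓ(v)` of `v ∈ ℤ³`. -/
def len3 (v : ℤ × ℤ × ℤ) : ℤ := v.1 + v.2.1 + v.2.2

/-- The trade lattice `L_t = ker π_t`. -/
def L3 (a b d t : ℤ) : Set (ℤ × ℤ × ℤ) := {v | pi3 a b d t v = 0}

/-- The orthant `O⁺_t = {v ∈ L_t : v0 ≥ 0, v1 ≥ 0}`. -/
def OPlus (a b d t : ℤ) : Set (ℤ × ℤ × ℤ) :=
  {v ∈ L3 a b d t | 0 ≤ v.1 ∧ 0 ≤ v.2.1}

/-- The orthant `O±_t = {v ∈ L_t : v0 ≥ 0, v2 ≥ 0}`. -/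
def OPm (a b d t : ℤ) : Set (ℤ × ℤ × ℤ) :=
  {v ∈ L3 a b d t | 0 ≤ v.1 ∧ 0 ≤ v.2.2}

/-- The orthant `O⁻_t = {v ∈ L_t : v1 ≥ 0, v2 ≥ 0}`. -/
def OMinus (a b d t : ℤ) : Set (ℤ × ℤ × ℤ) :=
  {v ∈ L3 a b d t | 0 ≤ v.2.1 ∧ 0 ≤ v.2.2}

/-- `φ01(v) = v + b*(a+b)*ℓ(v)*(1, -1, 0)`. -/
def phi01 (a b : ℤ) (v : ℤ × ℤ × ℤ) : ℤ × ℤ × ℤ :=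
  v + (b * (a + b) * len3 v) • ((1 : ℤ), (-1 : ℤ), (0 : ℤ))

/-- `φ02(v) = v + a*b*ℓ(v)*(1, 0, -1)`. -/
def phi02 (a b : ℤ) (v : ℤ × ℤ × ℤ) : ℤ × ℤ × ℤ :=
  v + (a * b * len3 v) • ((1 : ℤ), (0 : ℤ), (-1 : ℤ))

/-- `φ12(v) = v + a*(a+b)*ℓ(v)*(0, 1, -1)`. -/
def phi12 (a b : ℤ) (v : ℤ × ℤ × ℤ) : ℤ × ℤ × ℤ :=
  v + (a * (a + b) * len3 v) • ((0 : ℤ), (1 : ℤ), (-1 : ℤ))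

/-- `v` is reducible in the orthant `O` if it is a sum of two nonzero elements of `O`. -/
def Reducible (O : Set (ℤ × ℤ × ℤ)) (v : ℤ × ℤ × ℤ) : Prop :=
  ∃ u w : ℤ × ℤ × ℤ, u ∈ O ∧ w ∈ O ∧ u ≠ 0 ∧ w ≠ 0 ∧ v = u + w

/-- The Hilbert basis of the orthant `O`: its irreducible elements. -/
def HB (O : Set (ℤ × ℤ × ℤ)) : Set (ℤ × ℤ × ℤ) :=
  {v ∈ O | v ≠ 0 ∧ ¬ Reducible O v}

/-- `Ŝ_t = {v ∈ O±_t : v0 ≤ b or v2 ≤ a}`. -/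
def Shat (a b d t : ℤ) : Set (ℤ × ℤ × ℤ) :=
  {v ∈ OPm a b d t | v.1 ≤ b ∨ v.2.2 ≤ a}

/-- The piecewise map `φ̂`, given by `φ12` when `v0 ≤ b`, and `φ01` otherwise. -/
def phihat (a b : ℤ) (v : ℤ × ℤ × ℤ) : ℤ × ℤ × ℤ :=
  if v.1 ≤ b then phi12 a b v else phi01 a b v

def psi12 (a b : ℤ) (v : ℤ × ℤ × ℤ) : ℤ × ℤ × ℤ :=
  v + (a * (a + b) * len3 v) • ((0 : ℤ), (-1 : ℤ), (1 : ℤ))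
def psi01 (a b : ℤ) (v : ℤ × ℤ × ℤ) : ℤ × ℤ × ℤ :=
  v + (b * (a + b) * len3 v) • ((-1 : ℤ), (1 : ℤ), (0 : ℤ))

lemma phi12_eq (a b : ℤ) (v : ℤ × ℤ × ℤ) :
    phi12 a b v = (v.1, v.2.1 + a * (a + b) * len3 v, v.2.2 - a * (a + b) * len3 v) := by
  simp [phi12, Prod.ext_iff]; ring

lemma phi01_eq (a b : ℤ) (v : ℤ × ℤ × ℤ) :
    phi01 a b v = (v.1 + b * (a + b) * len3 v, v.2.1 - b * (a + b) * len3 v, v.2.2) := by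
  simp [phi01, Prod.ext_iff]; ring

lemma psi12_eq (a b : ℤ) (v : ℤ × ℤ × ℤ) :
    psi12 a b v = (v.1, v.2.1 - a * (a + b) * len3 v, v.2.2 + a * (a + b) * len3 v) := by
  simp [psi12, Prod.ext_iff]; ring

lemma psi01_eq (a b : ℤ) (v : ℤ × ℤ × ℤ) :
    psi01 a b v = (v.1 - b * (a + b) * len3 v, v.2.1 + b * (a + b) * len3 v, v.2.2) := by
  simp [psi01, Prod.ext_iff]; ring

lemma len3_phi12 (a b : ℤ) (v : ℤ × ℤ × ℤ) : len3 (phi12 a b v) = len3 v := by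
  simp [phi12_eq, len3] <;> ring
lemma len3_phi01 (a b : ℤ) (v : ℤ × ℤ × ℤ) : len3 (phi01 a b v) = len3 v := by
  simp [phi01_eq, len3] <;> ring
lemma len3_psi12 (a b : ℤ) (v : ℤ × ℤ × ℤ) : len3 (psi12 a b v) = len3 v := by
  simp [psi12_eq, len3] <;> ring
lemma len3_psi01 (a b : ℤ) (v : ℤ × ℤ × ℤ) : len3 (psi01 a b v) = len3 v := by
  simp [psi01_eq, len3] <;> ring

lemma len3_add (u w : ℤ × ℤ × ℤ) : len3 (u + w) = len3 u + len3 w := by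
  simp [len3]; ring

lemma phi12_add (a b : ℤ) (u w : ℤ × ℤ × ℤ) :
    phi12 a b (u + w) = phi12 a b u + phi12 a b w := by
  refine Prod.ext ?_ (Prod.ext ?_ ?_) <;> simp [phi12_eq, len3] <;> ring

lemma phi01_add (a b : ℤ) (u w : ℤ × ℤ × ℤ) :
    phi01 a b (u + w) = phi01 a b u + phi01 a b w := by
  refine Prod.ext ?_ (Prod.ext ?_ ?_) <;> simp [phi01_eq, len3] <;> ring

lemma psi12_add (a b : ℤ) (u w : ℤ × ℤ × ℤ) :
    psi12 a b (u + w) = psi12 a b u + psi12 a b w := by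
  refine Prod.ext ?_ (Prod.ext ?_ ?_) <;> simp [psi12_eq, len3] <;> ring

lemma psi01_add (a b : ℤ) (u w : ℤ × ℤ × ℤ) :
    psi01 a b (u + w) = psi01 a b u + psi01 a b w := by
  refine Prod.ext ?_ (Prod.ext ?_ ?_) <;> simp [psi01_eq, len3] <;> ring

lemma psi12_phi12 (a b : ℤ) (v : ℤ × ℤ × ℤ) : psi12 a b (phi12 a b v) = v := by
  rw [psi12_eq, len3_phi12, phi12_eq]; simp
lemma phi12_psi12 (a b : ℤ) (v : ℤ × ℤ × ℤ) : phi12 a b (psi12 a b v) = v := by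
  rw [phi12_eq, len3_psi12, psi12_eq]; simp
lemma psi01_phi01 (a b : ℤ) (v : ℤ × ℤ × ℤ) : psi01 a b (phi01 a b v) = v := by
  rw [psi01_eq, len3_phi01, phi01_eq]; simp
lemma phi01_psi01 (a b : ℤ) (v : ℤ × ℤ × ℤ) : phi01 a b (psi01 a b v) = v := by
  rw [phi01_eq, len3_psi01, psi01_eq]; simp

lemma pi_phi12 (a b d t : ℤ) (v : ℤ × ℤ × ℤ) :
    pi3 a b d (t + d * a * b * (a + b)) (phi12 a b v) = pi3 a b d t v := by
  rw [phi12_eq]; simp only [pi3, len3]; ring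
lemma pi_phi01 (a b d t : ℤ) (v : ℤ × ℤ × ℤ) :
    pi3 a b d (t + d * a * b * (a + b)) (phi01 a b v) = pi3 a b d t v := by
  rw [phi01_eq]; simp only [pi3, len3]; ring
lemma pi_psi12 (a b d t : ℤ) (v : ℤ × ℤ × ℤ) :
    pi3 a b d t (psi12 a b v) = pi3 a b d (t + d * a * b * (a + b)) v := by
  rw [psi12_eq]; simp only [pi3, len3]; ring
lemma pi_psi01 (a b d t : ℤ) (v : ℤ × ℤ × ℤ) :
    pi3 a b d t (psi01 a b v) = pi3 a b d (t + d * a * b * (a + b)) v := by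
  rw [psi01_eq]; simp only [pi3, len3]; ring

lemma balance {a b d s : ℤ} {v : ℤ × ℤ × ℤ} (hv : v ∈ L3 a b d s) :
    s * len3 v = d * a * v.1 - d * b * v.2.2 := by
  have h : (s - d * a) * v.1 + s * v.2.1 + (s + d * b) * v.2.2 = 0 := hv
  unfold len3; linear_combination h

lemma len_nonpos {a b d s : ℤ} (ha : 1 ≤ a) (hb : 1 ≤ b) (hd : 1 ≤ d)
    (hs : d * a * b < s) {v : ℤ × ℤ × ℤ} (hv : v ∈ OPm a b d s) (h1 : v.1 ≤ b) :
    len3 v ≤ 0 := by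
  obtain ⟨hL, h0, h2⟩ := hv
  have hbal := balance hL
  have hs0 : 0 < s := lt_trans (by positivity) hs
  by_contra h
  push_neg at h
  have h' : 1 ≤ len3 v := h
  have k1 : d * a * v.1 ≤ d * a * b :=
    mul_le_mul_of_nonneg_left h1 (by positivity)
  have k2 : 0 ≤ d * b * v.2.2 := mul_nonneg (by positivity) h2
  have k3 : s ≤ s * len3 v := le_mul_of_one_le_right hs0.le h'
  linarith

lemma len_nonneg {a b d s : ℤ} (ha : 1 ≤ a) (hb : 1 ≤ b) (hd : 1 ≤ d)
    (hs : d * a * b < s) {v : ℤ × ℤ × ℤ} (hv : v ∈ OPm a b d s) (h2 : v.2.2 ≤ a) :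
    0 ≤ len3 v := by
  obtain ⟨hL, h0, h2'⟩ := hv
  have hbal := balance hL
  have hs0 : 0 < s := lt_trans (by positivity) hs
  by_contra h
  push_neg at h
  have h' : len3 v ≤ -1 := by omega
  have k1 : d * b * v.2.2 ≤ d * b * a :=
    mul_le_mul_of_nonneg_left h2 (by positivity)
  have k2 : 0 ≤ d * a * v.1 := mul_nonneg (by positivity) h0
  have k3 : s * len3 v ≤ s * (-1) := mul_le_mul_of_nonneg_left h' hs0.le
  nlinarith

lemma phi12_mem {a b d t : ℤ} (ha : 1 ≤ a) (hb : 1 ≤ b) (hd : 1 ≤ d)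
    (hB : d * a * b < t) {v : ℤ × ℤ × ℤ} (hv : v ∈ OPm a b d t) (h1 : v.1 ≤ b) :
    phi12 a b v ∈ OPm a b d (t + d * a * b * (a + b)) := by
  have hl : len3 v ≤ 0 := len_nonpos ha hb hd hB hv h1
  obtain ⟨hL, h0, h2⟩ := hv
  refine ⟨?_, ?_, ?_⟩
  · show pi3 _ _ _ _ _ = 0
    rw [pi_phi12]; exact hL
  · rw [phi12_eq]; exact h0
  · rw [phi12_eq]
    have : 0 ≤ a * (a + b) := by positivity
    simp only
    nlinarith

lemma phi01_mem {a b d t : ℤ} (ha : 1 ≤ a) (hb : 1 ≤ b) (hd : 1 ≤ d)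
    (hB : d * a * b < t) {v : ℤ × ℤ × ℤ} (hv : v ∈ OPm a b d t) (h2 : v.2.2 ≤ a) :
    phi01 a b v ∈ OPm a b d (t + d * a * b * (a + b)) := by
  have hl : 0 ≤ len3 v := len_nonneg ha hb hd hB hv h2
  obtain ⟨hL, h0, h2'⟩ := hv
  refine ⟨?_, ?_, ?_⟩
  · show pi3 _ _ _ _ _ = 0
    rw [pi_phi01]; exact hL
  · rw [phi01_eq]
    have : 0 ≤ b * (a + b) := by positivity
    simp only
    nlinarith
  · rw [phi01_eq]; exact h2'

lemma psi12_mem {a b d t : ℤ} (ha : 1 ≤ a) (hb : 1 ≤ b) (hd : 1 ≤ d)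
    (hB : d * a * b < t) {w : ℤ × ℤ × ℤ}
    (hw : w ∈ OPm a b d (t + d * a * b * (a + b))) (h1 : w.1 ≤ b) :
    psi12 a b w ∈ OPm a b d t := by
  have hR : (0:ℤ) ≤ d * a * b * (a + b) := by positivity
  have hB' : d * a * b < t + d * a * b * (a + b) := by linarith
  have hl : len3 w ≤ 0 := len_nonpos ha hb hd hB' hw h1
  obtain ⟨hL, h0, h2⟩ := hw
  have hbal := balance hL
  have ht0 : 0 < t := lt_trans (by positivity) hB
  refine ⟨?_, ?_, ?_⟩
  · show pi3 _ _ _ _ _ = 0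
    rw [pi_psi12]; exact hL
  · rw [psi12_eq]; exact h0
  · rw [psi12_eq]
    simp only
    have key : d * b * (w.2.2 + a * (a + b) * len3 w) = d * a * w.1 - t * len3 w := by
      linear_combination hbal
    have k1 : 0 ≤ d * a * w.1 := mul_nonneg (by positivity) h0
    have k2 : 0 ≤ - (t * len3 w) := by nlinarith
    have k3 : 0 ≤ d * b * (w.2.2 + a * (a + b) * len3 w) := by linarith
    have hdb : (0:ℤ) < d * b := by positivity
    exact nonneg_of_mul_nonneg_right k3 hdb

lemma psi01_mem {a b d t : ℤ} (ha : 1 ≤ a) (hb : 1 ≤ b) (hd : 1 ≤ d)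
    (hB : d * a * b < t) {w : ℤ × ℤ × ℤ}
    (hw : w ∈ OPm a b d (t + d * a * b * (a + b))) (h2 : w.2.2 ≤ a) :
    psi01 a b w ∈ OPm a b d t := by
  have hR : (0:ℤ) ≤ d * a * b * (a + b) := by positivity
  have hB' : d * a * b < t + d * a * b * (a + b) := by linarith
  have hl : 0 ≤ len3 w := len_nonneg ha hb hd hB' hw h2
  obtain ⟨hL, h0, h2'⟩ := hw
  have hbal := balance hL
  have ht0 : 0 < t := lt_trans (by positivity) hB
  refine ⟨?_, ?_, ?_⟩
  · show pi3 _ _ _ _ _ = 0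
    rw [pi_psi01]; exact hL
  · rw [psi01_eq]
    simp only
    have key : d * a * (w.1 - b * (a + b) * len3 w) = t * len3 w + d * b * w.2.2 := by
      linear_combination -hbal
    have k1 : 0 ≤ d * b * w.2.2 := mul_nonneg (by positivity) h2'
    have k2 : 0 ≤ t * len3 w := mul_nonneg ht0.le hl
    have k3 : 0 ≤ d * a * (w.1 - b * (a + b) * len3 w) := by linarith
    exact nonneg_of_mul_nonneg_right k3 (by positivity)
  · rw [psi01_eq]; exact h2'

lemma psi12_zero (a b : ℤ) : psi12 a b 0 = 0 := by simp [psi12, len3]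
lemma psi01_zero (a b : ℤ) : psi01 a b 0 = 0 := by simp [psi01, len3]
lemma phi12_zero (a b : ℤ) : phi12 a b 0 = 0 := by simp [phi12, len3]
lemma phi01_zero (a b : ℤ) : phi01 a b 0 = 0 := by simp [phi01, len3]

lemma phi12_ne (a b : ℤ) {v : ℤ × ℤ × ℤ} (h : v ≠ 0) : phi12 a b v ≠ 0 := by
  intro h0
  exact h (by rw [← psi12_phi12 a b v, h0, psi12_zero])
lemma phi01_ne (a b : ℤ) {v : ℤ × ℤ × ℤ} (h : v ≠ 0) : phi01 a b v ≠ 0 := by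
  intro h0
  exact h (by rw [← psi01_phi01 a b v, h0, psi01_zero])
lemma psi12_ne (a b : ℤ) {v : ℤ × ℤ × ℤ} (h : v ≠ 0) : psi12 a b v ≠ 0 := by
  intro h0
  exact h (by rw [← phi12_psi12 a b v, h0, phi12_zero])
lemma psi01_ne (a b : ℤ) {v : ℤ × ℤ × ℤ} (h : v ≠ 0) : psi01 a b v ≠ 0 := by
  intro h0
  exact h (by rw [← phi01_psi01 a b v, h0, phi01_zero])

/-- every v ∈ O±ₛ with v0 > b and v2 > a is reducible, via the trade (b, -(a+b), a). -/
lemma big_reducible {a b d s : ℤ} (ha : 1 ≤ a) (hb : 1 ≤ b) {v : ℤ × ℤ × ℤ}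
    (hv : v ∈ OPm a b d s) (h1 : b < v.1) (h2 : a < v.2.2) :
    Reducible (OPm a b d s) v := by
  obtain ⟨hL, h0, h2'⟩ := hv
  have hL' : pi3 a b d s v = 0 := hL
  refine ⟨(b, -(a+b), a), v - (b, -(a+b), a), ⟨?_, ?_, ?_⟩, ⟨?_, ?_, ?_⟩, ?_, ?_, by abel⟩
  · show pi3 a b d s (b, -(a+b), a) = 0
    simp only [pi3]; ring
  · simp; omega
  · simp; omega
  · show pi3 a b d s (v - (b, -(a+b), a)) = 0
    simp only [pi3, Prod.fst_sub, Prod.snd_sub]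
    simp only [pi3] at hL'
    linear_combination hL'
  · simp; omega
  · simp; omega
  · simp [Prod.ext_iff]; omega
  · simp [Prod.ext_iff, sub_eq_zero]
    intro h; omega

lemma redA {a b d t : ℤ} (ha : 1 ≤ a) (hb : 1 ≤ b) (hd : 1 ≤ d)
    (hB : d * a * b < t) {v : ℤ × ℤ × ℤ} (hv : v ∈ OPm a b d t) (h1 : v.1 ≤ b) :
    Reducible (OPm a b d (t + d * a * b * (a + b))) (phi12 a b v) ↔
      Reducible (OPm a b d t) v := by
  constructor
  · rintro ⟨U, W, hU, hW, hU0, hW0, hsum⟩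
    have hUW1 : U.1 + W.1 = v.1 := by
      have : (phi12 a b v).1 = U.1 + W.1 := by rw [hsum]; rfl
      rw [phi12_eq] at this; exact this.symm
    have hU1 : U.1 ≤ b := by have := hU.2.1; have := hW.2.1; omega
    have hW1 : W.1 ≤ b := by have := hU.2.1; have := hW.2.1; omega
    refine ⟨psi12 a b U, psi12 a b W, psi12_mem ha hb hd hB hU hU1,
      psi12_mem ha hb hd hB hW hW1, psi12_ne a b hU0, psi12_ne a b hW0, ?_⟩
    rw [← psi12_add, ← hsum, psi12_phi12]
  · rintro ⟨u, w, hu, hw, hu0, hw0, hsum⟩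
    have huw1 : u.1 + w.1 = v.1 := by rw [hsum]; rfl
    have hu1 : u.1 ≤ b := by have := hu.2.1; have := hw.2.1; omega
    have hw1 : w.1 ≤ b := by have := hu.2.1; have := hw.2.1; omega
    exact ⟨phi12 a b u, phi12 a b w, phi12_mem ha hb hd hB hu hu1,
      phi12_mem ha hb hd hB hw hw1, phi12_ne a b hu0, phi12_ne a b hw0,
      by rw [hsum, phi12_add]⟩

lemma redB {a b d t : ℤ} (ha : 1 ≤ a) (hb : 1 ≤ b) (hd : 1 ≤ d)
    (hB : d * a * b < t) {v : ℤ × ℤ × ℤ} (hv : v ∈ OPm a b d t) (h2 : v.2.2 ≤ a) :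
    Reducible (OPm a b d (t + d * a * b * (a + b))) (phi01 a b v) ↔
      Reducible (OPm a b d t) v := by
  constructor
  · rintro ⟨U, W, hU, hW, hU0, hW0, hsum⟩
    have hUW2 : U.2.2 + W.2.2 = v.2.2 := by
      have : (phi01 a b v).2.2 = U.2.2 + W.2.2 := by rw [hsum]; rfl
      rw [phi01_eq] at this; exact this.symm
    have hU2 : U.2.2 ≤ a := by have := hU.2.2; have := hW.2.2; omega
    have hW2 : W.2.2 ≤ a := by have := hU.2.2; have := hW.2.2; omega
    refine ⟨psi01 a b U, psi01 a b W, psi01_mem ha hb hd hB hU hU2,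
      psi01_mem ha hb hd hB hW hW2, psi01_ne a b hU0, psi01_ne a b hW0, ?_⟩
    rw [← psi01_add, ← hsum, psi01_phi01]
  · rintro ⟨u, w, hu, hw, hu0, hw0, hsum⟩
    have huw2 : u.2.2 + w.2.2 = v.2.2 := by rw [hsum]; rfl
    have hu2 : u.2.2 ≤ a := by have := hu.2.2; have := hw.2.2; omega
    have hw2 : w.2.2 ≤ a := by have := hu.2.2; have := hw.2.2; omega
    exact ⟨phi01 a b u, phi01 a b w, phi01_mem ha hb hd hB hu hu2,
      phi01_mem ha hb hd hB hw hw2, phi01_ne a b hu0, phi01_ne a b hw0,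
      by rw [hsum, phi01_add]⟩


theorem phihat_preserves_reducibility_and_hilbert_basis (a b d t : ℤ) (ha : 1 ≤ a) (hb : 1 ≤ b) (hd : 1 ≤ d)
    (hab : Int.gcd a b = 1) (ht : d * a < t) (htd : Int.gcd t d = 1)
    (hBpm : d * a * b < t) :
    (∀ v ∈ Shat a b d t,
        (Reducible (OPm a b d (t + d * a * b * (a + b))) (phihat a b v) ↔
          Reducible (OPm a b d t) v)) ∧
    Set.BijOn (phihat a b) (HB (OPm a b d t))
      (HB (OPm a b d (t + d * a * b * (a + b)))) ∧
    (HB (OPm a b d t)).ncard = (HB (OPm a b d (t + d * a * b * (a + b)))).ncard := by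
  have hR : (0:ℤ) ≤ d * a * b * (a + b) := by positivity
  have hB' : d * a * b < t + d * a * b * (a + b) := by linarith
  -- the reducibility transfer
  have hred : ∀ v ∈ Shat a b d t,
      (Reducible (OPm a b d (t + d * a * b * (a + b))) (phihat a b v) ↔
        Reducible (OPm a b d t) v) := by
    rintro v ⟨hvO, hcase⟩
    by_cases h1 : v.1 ≤ b
    · rw [show phihat a b v = phi12 a b v from if_pos h1]
      exact redA ha hb hd hBpm hvO h1
    · have h2 : v.2.2 ≤ a := hcase.resolve_left h1
      rw [show phihat a b v = phi01 a b v from if_neg h1]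
      exact redB ha hb hd hBpm hvO h2
  -- irreducibles lie in Ŝ
  have hb_branch : ∀ s : ℤ, ∀ v ∈ HB (OPm a b d s), v.1 ≤ b ∨ (b < v.1 ∧ v.2.2 ≤ a) := by
    rintro s v ⟨hvO, hv0, hvirr⟩
    by_cases h1 : v.1 ≤ b
    · exact Or.inl h1
    · push_neg at h1
      refine Or.inr ⟨h1, ?_⟩
      by_contra h2
      push_neg at h2
      exact hvirr (big_reducible ha hb hvO h1 h2)
  -- HB ⊆ Shat
  have hb_shat : ∀ v ∈ HB (OPm a b d t), v ∈ Shat a b d t := by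
    intro v hv
    rcases hb_branch t v hv with h | h
    · exact ⟨hv.1, Or.inl h⟩
    · exact ⟨hv.1, Or.inr h.2⟩
  -- MapsTo
  have hmaps : Set.MapsTo (phihat a b) (HB (OPm a b d t))
      (HB (OPm a b d (t + d * a * b * (a + b)))) := by
    intro v hv
    obtain ⟨hvO, hv0, hvirr⟩ := hv
    rcases hb_branch t v ⟨hvO, hv0, hvirr⟩ with h1 | ⟨h1, h2⟩
    · rw [show phihat a b v = phi12 a b v from if_pos h1]
      refine ⟨phi12_mem ha hb hd hBpm hvO h1, phi12_ne a b hv0, ?_⟩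
      rw [redA ha hb hd hBpm hvO h1]; exact hvirr
    · rw [show phihat a b v = phi01 a b v from if_neg (not_le.mpr h1)]
      refine ⟨phi01_mem ha hb hd hBpm hvO h2, phi01_ne a b hv0, ?_⟩
      rw [redB ha hb hd hBpm hvO h2]; exact hvirr
  -- InjOn
  have hinj : Set.InjOn (phihat a b) (HB (OPm a b d t)) := by
    intro u hu v hv heq
    rcases hb_branch t u hu with hu1 | ⟨hu1, hu2⟩ <;>
      rcases hb_branch t v hv with hv1 | ⟨hv1, hv2⟩
    · rw [show phihat a b u = phi12 a b u from if_pos hu1,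
          show phihat a b v = phi12 a b v from if_pos hv1] at heq
      rw [← psi12_phi12 a b u, heq, psi12_phi12]
    · exfalso
      rw [show phihat a b u = phi12 a b u from if_pos hu1,
          show phihat a b v = phi01 a b v from if_neg (not_le.mpr hv1)] at heq
      have h1 : (phi12 a b u).1 = (phi01 a b v).1 := by rw [heq]
      rw [phi12_eq, phi01_eq] at h1
      have hlv : 0 ≤ len3 v := len_nonneg ha hb hd hBpm hv.1 hv2
      have : (0:ℤ) ≤ b * (a + b) * len3 v := mul_nonneg (by positivity) hlv
      simp only at h1
      omega
    · exfalso
      rw [show phihat a b v = phi12 a b v from if_pos hv1,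
          show phihat a b u = phi01 a b u from if_neg (not_le.mpr hu1)] at heq
      have h1 : (phi01 a b u).1 = (phi12 a b v).1 := by rw [heq]
      rw [phi12_eq, phi01_eq] at h1
      have hlu : 0 ≤ len3 u := len_nonneg ha hb hd hBpm hu.1 hu2
      have : (0:ℤ) ≤ b * (a + b) * len3 u := mul_nonneg (by positivity) hlu
      simp only at h1
      omega
    · rw [show phihat a b u = phi01 a b u from if_neg (not_le.mpr hu1),
          show phihat a b v = phi01 a b v from if_neg (not_le.mpr hv1)] at heq
      rw [← psi01_phi01 a b u, heq, psi01_phi01]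
  -- SurjOn
  have hsurj : Set.SurjOn (phihat a b) (HB (OPm a b d t))
      (HB (OPm a b d (t + d * a * b * (a + b)))) := by
    intro w hw
    obtain ⟨hwO, hw0, hwirr⟩ := hw
    rcases hb_branch (t + d * a * b * (a + b)) w ⟨hwO, hw0, hwirr⟩ with h1 | ⟨h1, h2⟩
    · -- w.1 ≤ b : preimage psi12 w
      set v := psi12 a b w with hv
      have hvO : v ∈ OPm a b d t := psi12_mem ha hb hd hBpm hwO h1
      have hv1 : v.1 ≤ b := by rw [hv, psi12_eq]; exact h1
      have hphi : phihat a b v = w := by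
        rw [show phihat a b v = phi12 a b v from if_pos hv1, hv, phi12_psi12]
      refine ⟨v, ⟨hvO, psi12_ne a b hw0, ?_⟩, hphi⟩
      intro hredv
      apply hwirr
      have h := (redA ha hb hd hBpm hvO hv1).mpr hredv
      rwa [hv, phi12_psi12] at h
    · -- b < w.1, w.2.2 ≤ a : preimage psi01 w
      set v := psi01 a b w with hv
      have hvO : v ∈ OPm a b d t := psi01_mem ha hb hd hBpm hwO h2
      have hv2 : v.2.2 ≤ a := by rw [hv, psi01_eq]; exact h2
      have hnle : ¬ (v.1 ≤ b) := by
        intro hle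
        have hlv : len3 v ≤ 0 := len_nonpos ha hb hd hBpm hvO hle
        have hlw : 0 ≤ len3 w := len_nonneg ha hb hd hB' hwO h2
        have hlen : len3 v = len3 w := by rw [hv, len3_psi01]
        have hl0 : len3 w = 0 := by omega
        have hv1 : v.1 = w.1 := by rw [hv, psi01_eq]; simp [hl0]
        omega
      have hphi : phihat a b v = w := by
        rw [show phihat a b v = phi01 a b v from if_neg hnle, hv, phi01_psi01]
      refine ⟨v, ⟨hvO, psi01_ne a b hw0, ?_⟩, hphi⟩
      intro hredv
      apply hwirr
      have h := (redB ha hb hd hBpm hvO hv2).mpr hredv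
      rwa [hv, phi01_psi01] at h
  refine ⟨hred, ⟨hmaps, hinj, hsurj⟩, ?_⟩
  have h1 := Set.ncard_image_of_injOn hinj
  rw [Set.BijOn.image_eq ⟨hmaps, hinj, hsurj⟩] at h1
  exact h1.symm
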